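/- arXiv:2310.14647 — 2 statements merged into one kernel-verified Lean document; each statement's English description precedes it below -/
import Mathlib

section
/- For every finite simple graph G, the indicated domination number is at most the Grundy domination number: γᵢ(G) ≤ γ_gr(G). -/
open Finset

open scoped Classical

noncomputable section

namespace IndicatedDom

variable {V : Type*} [Fintype V]

/-- Closed neighborhood `N[v]` as a `Finset`. -/
def cnbhd (G : SimpleGraph V) (v : V) : Finset V :=
  insert v (G.neighborFinset v)

/-- `D` is a dominating set of `G`. -/
def Dominates (G : SimpleGraph V) (D : Finset V) : Prop :=
  ∀ u, ∃ v ∈ D, u ∈ cnbhd G v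

/-- The set of vertices not dominated by `D`. -/
def undom (G : SimpleGraph V) (D : Finset V) : Finset V :=
  univ.filter fun u => ∀ v ∈ D, u ∉ cnbhd G v

/-- Game value of the indicated domination game with a fuel parameter:
given the set `D` of vertices selected so far, Dominator indicates an
undominated vertex `u` (minimizing), Staller selects a vertex of `N[u]`
(maximizing); each selection counts one. -/
def giAux (G : SimpleGraph V) : ℕ → Finset V → ℕ
  | 0, _ => 0
  | (fuel+1), D =>
    if h : (undom G D).Nonempty then
      (undom G D).inf' h fun u =>
        (cnbhd G u).sup' ⟨u, Finset.mem_insert_self u _⟩ fun v => giAux G fuel (insert v D) + 1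
    else 0

/-- The indicated domination number `γᵢ(G)`. -/
def indicatedDomNum (G : SimpleGraph V) : ℕ :=
  giAux G (Fintype.card V) ∅

/-- Game value of the standard domination game with a fuel parameter:
`dom = true` means it is Dominator's turn (minimizing); legal moves are
vertices dominating at least one new vertex. -/
def gameAux (G : SimpleGraph V) : ℕ → Bool → Finset V → ℕ
  | 0, _, _ => 0
  | (fuel+1), dom, D =>
    if h : (univ.filter fun v => ∃ u ∈ cnbhd G v, u ∈ undom G D).Nonempty then
      if dom then
        (univ.filter fun v => ∃ u ∈ cnbhd G v, u ∈ undom G D).inf' h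
          fun v => gameAux G fuel false (insert v D) + 1
      else
        (univ.filter fun v => ∃ u ∈ cnbhd G v, u ∈ undom G D).sup' h
          fun v => gameAux G fuel true (insert v D) + 1
    else 0

/-- The game domination number `γ_g(G)` (Dominator starts). -/
def gameDomNum (G : SimpleGraph V) : ℕ :=
  gameAux G (Fintype.card V) true ∅

/-- A minimal dominating set. -/
def IsMinimalDominating (G : SimpleGraph V) (D : Finset V) : Prop :=
  Dominates G D ∧ ∀ D' ⊂ D, ¬ Dominates G D'

/-- The upper domination number `Γ(G)`. -/
def upperDomNum (G : SimpleGraph V) : ℕ :=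
  sSup {k | ∃ D : Finset V, IsMinimalDominating G D ∧ D.card = k}

/-- A dominating (Grundy) sequence: every vertex dominates something new,
and the whole sequence dominates `G`. -/
def IsDominatingSeq (G : SimpleGraph V) (l : List V) : Prop :=
  (∀ i : Fin l.length, ∃ u, u ∈ cnbhd G (l.get i) ∧
      ∀ j : Fin l.length, (j : ℕ) < (i : ℕ) → u ∉ cnbhd G (l.get j)) ∧
    Dominates G l.toFinset

/-- The Grundy domination number `γ_gr(G)`. -/
def grundyDomNum (G : SimpleGraph V) : ℕ :=
  sSup {k | ∃ l : List V, IsDominatingSeq G l ∧ l.length = k}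

/-- The independence number `α(G)`. -/
def indepNum (G : SimpleGraph V) : ℕ :=
  sSup {k | ∃ S : Finset V, (∀ x ∈ S, ∀ y ∈ S, ¬ G.Adj x y) ∧ S.card = k}

/-- `S` is irredundant: every `x ∈ S` has a private neighbor w.r.t. `S`. -/
def Irredundant (G : SimpleGraph V) (S : Finset V) : Prop :=
  ∀ x ∈ S, ∃ w, (∃ v ∈ S, w ∈ cnbhd G v) ∧ ¬ ∃ v ∈ S.erase x, w ∈ cnbhd G v

/-- The upper irredundance number `IR(G)`. -/
def upperIrredNum (G : SimpleGraph V) : ℕ :=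
  sSup {k | ∃ S : Finset V, Irredundant G S ∧ (∀ T, S ⊂ T → ¬ Irredundant G T) ∧ S.card = k}

/-- The star `K_{1,n}` with center `0`. -/
def starGraph (n : ℕ) : SimpleGraph (Fin (n+1)) where
  Adj a b := a ≠ b ∧ (a = 0 ∨ b = 0)
  symm := by constructor; intro a b h; exact ⟨h.1.symm, h.2.symm⟩
  loopless := by constructor; intro a h; exact h.1 rfl

/-- Two copies of `K_n` with a matching joining corresponding vertices of
index `≥ 1` (i.e. `K_n □ K₂` minus the matching edge at index `0`). -/
def Hgraph (n : ℕ) : SimpleGraph (Fin n × Bool) where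
  Adj a b := (a.2 = b.2 ∧ a.1 ≠ b.1) ∨ (a.2 ≠ b.2 ∧ a.1 = b.1 ∧ (a.1 : ℕ) ≠ 0)
  symm := by
    constructor
    rintro ⟨i, s⟩ ⟨j, t⟩ (⟨h1, h2⟩ | ⟨h1, h2, h3⟩)
    · exact Or.inl ⟨h1.symm, h2.symm⟩
    · exact Or.inr ⟨h1.symm, h2.symm, h2 ▸ h3⟩
  loopless := by constructor; rintro ⟨i, s⟩ (⟨_, h⟩ | ⟨h, _⟩) <;> exact h rfl

/-- The `k`-th power of the path on `n` vertices: `i ~ j` iff `1 ≤ |i-j| ≤ k`. -/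
def pathPow (n k : ℕ) : SimpleGraph (Fin n) where
  Adj i j := i ≠ j ∧ (i : ℕ) ≤ (j : ℕ) + k ∧ (j : ℕ) ≤ (i : ℕ) + k
  symm := by constructor; intro i j h; exact ⟨h.1.symm, h.2.2, h.2.1⟩
  loopless := by constructor; intro i h; exact h.1 rfl

/-- The cycle on `m` vertices (for `m ≥ 3`), modeled on `ZMod m`. -/
def cyc (m : ℕ) : SimpleGraph (ZMod m) where
  Adj i j := i ≠ j ∧ (i + 1 = j ∨ j + 1 = i)
  symm := by constructor; intro i j h; exact ⟨h.1.symm, h.2.symm⟩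
  loopless := by constructor; intro i h; exact h.1 rfl

/-- The graph `D₁`: a `9`-cycle `x₁x₂…x₉` plus chords `x₁x₃, x₄x₆, x₇x₉`
(vertex `xᵢ` is represented by `i - 1 : ZMod 9`). -/
def DGraph : SimpleGraph (ZMod 9) where
  Adj i j := i ≠ j ∧ (i + 1 = j ∨ j + 1 = i ∨
    (i = 0 ∧ j = 2) ∨ (i = 2 ∧ j = 0) ∨ (i = 3 ∧ j = 5) ∨ (i = 5 ∧ j = 3) ∨
    (i = 6 ∧ j = 8) ∨ (i = 8 ∧ j = 6))
  symm := by constructor; intro i j h; refine ⟨h.1.symm, ?_⟩; tauto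
  loopless := by constructor; intro i h; exact h.1 rfl

def IsDominatingSeqFrom (G : SimpleGraph V) (D : Finset V) (l : List V) : Prop :=
  (∀ i : Fin l.length, ∃ u, u ∈ cnbhd G (l.get i) ∧ u ∈ undom G D ∧
      ∀ j : Fin l.length, (j : ℕ) < (i : ℕ) → u ∉ cnbhd G (l.get j)) ∧
    Dominates G (D ∪ l.toFinset)

lemma mem_cnbhd_comm (G : SimpleGraph V) {u v : V} : u ∈ cnbhd G v ↔ v ∈ cnbhd G u := by
  simp only [cnbhd, mem_insert, SimpleGraph.mem_neighborFinset, SimpleGraph.adj_comm, eq_comm]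

lemma mem_undom {G : SimpleGraph V} {D : Finset V} {u : V} :
    u ∈ undom G D ↔ ∀ v ∈ D, u ∉ cnbhd G v := by
  simp [undom]

lemma undom_insert_ssubset {G : SimpleGraph V} {D : Finset V} {u : V} (hu : u ∈ undom G D) :
    undom G (insert u D) ⊂ undom G D := by
  refine ssubset_of_subset_of_ne (fun x hx => ?_) fun h => ?_
  · rw [mem_undom] at hx ⊢
    exact fun v hv => hx v (mem_insert_of_mem hv)
  · rw [← h, mem_undom] at hu
    exact hu u (mem_insert_self u D) (mem_insert_self u _)

lemma dominates_of_undom_eq_empty {G : SimpleGraph V} {D : Finset V} (h : undom G D = ∅) :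
    Dominates G D := by
  intro x
  by_contra! hx
  have : x ∈ undom G D := mem_undom.mpr hx
  simp [h] at this

lemma IsDominatingSeqFrom.cons {G : SimpleGraph V} {D : Finset V} {v w : V} {l : List V}
    (hl : IsDominatingSeqFrom G (insert v D) l) (hw : w ∈ undom G D) (hv : v ∈ cnbhd G w) :
    IsDominatingSeqFrom G D (v :: l) := by
  refine ⟨?_, fun x => ?_⟩
  · rintro ⟨_ | i, hi⟩
    · exact ⟨w, (mem_cnbhd_comm G).mp hv, hw, fun j hj => absurd hj (Nat.not_lt_zero _)⟩
    · obtain ⟨u, hu, huD, hnew⟩ := hl.1 ⟨i, Nat.lt_of_succ_lt_succ hi⟩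
      have huD' := mem_undom.mp huD
      refine ⟨u, hu, mem_undom.mpr fun x hx => huD' x (mem_insert_of_mem hx), ?_⟩
      rintro ⟨_ | j, hj⟩ hji
      · exact huD' v (mem_insert_self v D)
      · exact hnew ⟨j, Nat.lt_of_succ_lt_succ hj⟩ (Nat.lt_of_succ_lt_succ hji)
  · obtain ⟨y, hy, hxy⟩ := hl.2 x
    refine ⟨y, ?_, hxy⟩
    simp only [List.toFinset_cons, mem_union, mem_insert] at hy ⊢
    tauto

lemma exists_isDominatingSeqFrom (G : SimpleGraph V) (D : Finset V) :
    ∃ l, IsDominatingSeqFrom G D l := by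
  induction hn : (undom G D).card using Nat.strong_induction_on generalizing D with
  | _ n ih =>
    rcases (undom G D).eq_empty_or_nonempty with h | ⟨u, hu⟩
    · exact ⟨[], fun i => i.elim0, by simpa using dominates_of_undom_eq_empty h⟩
    · obtain ⟨l, hl⟩ := ih _ (hn ▸ card_lt_card (undom_insert_ssubset hu)) (insert u D) rfl
      exact ⟨u :: l, hl.cons hu (mem_insert_self u _)⟩

/-- Let Dominator indicate any undominated `u` and Staller answer with a maximising `v ∈ N[u]`:
`v` dominates the new vertex `u`, so the selections form a dominating sequence. -/
lemma exists_isDominatingSeqFrom_giAux_le (G : SimpleGraph V) :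
    ∀ (fuel : ℕ) (D : Finset V), ∃ l, IsDominatingSeqFrom G D l ∧ giAux G fuel D ≤ l.length
  | 0, D => (exists_isDominatingSeqFrom G D).imp fun _ hl => ⟨hl, by simp [giAux]⟩
  | fuel + 1, D => by
    rw [giAux]
    split_ifs with h
    · obtain ⟨u, hu⟩ := h
      obtain ⟨v, hv, hmax⟩ := (cnbhd G u).exists_mem_eq_sup' ⟨u, mem_insert_self u _⟩
        fun v => giAux G fuel (insert v D) + 1
      obtain ⟨l, hl, hlen⟩ := exists_isDominatingSeqFrom_giAux_le G fuel (insert v D)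
      refine ⟨v :: l, hl.cons hu hv, ?_⟩
      calc _ ≤ _ := inf'_le _ hu
        _ = giAux G fuel (insert v D) + 1 := hmax
        _ ≤ (v :: l).length := by simpa using hlen
    · exact (exists_isDominatingSeqFrom G D).imp fun _ hl => ⟨hl, Nat.zero_le _⟩

lemma IsDominatingSeqFrom.isDominatingSeq_of_empty {G : SimpleGraph V} {l : List V}
    (hl : IsDominatingSeqFrom G ∅ l) : IsDominatingSeq G l :=
  ⟨fun i => (hl.1 i).imp fun _ hu => ⟨hu.1, hu.2.2⟩, by simpa using hl.2⟩

lemma IsDominatingSeq.length_le {G : SimpleGraph V} {l : List V} (hl : IsDominatingSeq G l) :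
    l.length ≤ Fintype.card V := by
  choose u hu hnew using hl.1
  have hinj : Function.Injective u := by
    intro i j hij
    by_contra hne
    rcases lt_or_gt_of_ne (Fin.val_ne_of_ne hne) with hlt | hlt
    · exact hnew j i hlt (hij ▸ hu i)
    · exact hnew i j hlt (hij.symm ▸ hu j)
  simpa using Fintype.card_le_of_injective u hinj

lemma le_grundyDomNum {G : SimpleGraph V} {l : List V} (hl : IsDominatingSeq G l) :
    l.length ≤ grundyDomNum G :=
  le_csSup ⟨Fintype.card V, fun _ ⟨_, hl', hlen⟩ => hlen ▸ hl'.length_le⟩ ⟨l, hl, rfl⟩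

/-- `γᵢ(G) ≤ γ_gr(G)` for every finite simple graph. -/
theorem stmt1 {V : Type*} [Fintype V] (G : SimpleGraph V) :
    indicatedDomNum G ≤ grundyDomNum G := by
  obtain ⟨l, hl, hle⟩ := exists_isDominatingSeqFrom_giAux_le G (Fintype.card V) ∅
  exact hle.trans (le_grundyDomNum hl.isDominatingSeq_of_empty)

end IndicatedDom
end
end

section
/- If G is a bipartite graph, then α(G) = Γ(G) = IR(G), i.e., the independence number, the upper domination number, and the upper irredundance number coincide. -/
open Finset

open scoped Classical

noncomputable section

namespace IndicatedDom

variable {V : Type*} [Fintype V]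

/-! In any graph `α ≤ Γ ≤ IR`. A maximum independent set is maximal, hence dominating, and an
independent dominating set is minimal dominating. A minimal dominating set is irredundant, since
minimality leaves every vertex a private neighbour, and it is maximal irredundant, since a vertex
added to a dominating set has no private neighbour.

For `IR ≤ α`, 2-colour `G` and let `w x ∈ N[x]` be a private neighbour of each `x` in an
irredundant set `S`. Keep the vertices of colour `1` and replace each `x` of colour `0` by `w x`.
Privacy makes this replacement injective on `S`. Each new vertex has colour `1` unless it is an
`x = w x`, and such an `x` has no neighbour among the other new vertices, so the image is an
independent set of size `|S|`. -/

section Bounds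

variable {G : SimpleGraph V}

lemma mem_cnbhd {u v : V} : u ∈ cnbhd G v ↔ u = v ∨ G.Adj v u := by
  simp [cnbhd, SimpleGraph.mem_neighborFinset]

lemma mem_cnbhd_self (v : V) : v ∈ cnbhd G v :=
  mem_insert_self v _

lemma mem_cnbhd_of_adj {u v : V} (h : G.Adj v u) : u ∈ cnbhd G v :=
  mem_cnbhd.2 (Or.inr h)

lemma forall_not_adj_iff_isIndepSet {W : Type*} {H : SimpleGraph W} {S : Finset W} :
    (∀ x ∈ S, ∀ y ∈ S, ¬ H.Adj x y) ↔ H.IsIndepSet (S : Set W) :=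
  ⟨fun h _ hx _ hy _ => h _ hx _ hy, fun h _ hx _ hy hxy => h hx hy hxy.ne hxy⟩

lemma indepNum_eq_simpleGraph_indepNum {W : Type*} (H : SimpleGraph W) :
    indepNum H = H.indepNum := by
  simp only [indepNum, SimpleGraph.indepNum, SimpleGraph.isNIndepSet_iff,
    forall_not_adj_iff_isIndepSet]

lemma bddAbove_of_forall_exists_card {s : Set ℕ} (h : ∀ k ∈ s, ∃ S : Finset V, S.card = k) :
    BddAbove s :=
  ⟨Fintype.card V, fun k hk => by obtain ⟨S, rfl⟩ := h k hk; exact S.card_le_univ⟩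

lemma card_le_upperDomNum {D : Finset V} (hD : IsMinimalDominating G D) :
    D.card ≤ upperDomNum G :=
  le_csSup (bddAbove_of_forall_exists_card fun _ ⟨D, _, hD⟩ => ⟨D, hD⟩) ⟨D, hD, rfl⟩

lemma card_le_upperIrredNum {S : Finset V} (hS : Irredundant G S)
    (hmax : ∀ T, S ⊂ T → ¬ Irredundant G T) : S.card ≤ upperIrredNum G :=
  le_csSup (bddAbove_of_forall_exists_card fun _ ⟨S, _, _, hS⟩ => ⟨S, hS⟩) ⟨S, hS, hmax, rfl⟩

end Bounds

section Domination

variable {G : SimpleGraph V}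

lemma dominates_of_maximal_isIndepSet {S : Finset V} (hS : Maximal G.IsIndepSet (S : Set V)) :
    Dominates G S := by
  intro u
  by_contra! hu
  have hins : G.IsIndepSet (insert u (S : Set V)) :=
    hS.1.insert fun v hv _ =>
      ⟨fun h => hu v hv (mem_cnbhd_of_adj h.symm), fun h => hu v hv (mem_cnbhd_of_adj h)⟩
  have huS : u ∈ S := hS.2 hins (Set.subset_insert u _) (Set.mem_insert u _)
  exact hu u huS (mem_cnbhd_self u)

lemma isMinimalDominating_of_isIndepSet {D : Finset V} (hind : G.IsIndepSet (D : Set V))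
    (hdom : Dominates G D) : IsMinimalDominating G D := by
  refine ⟨hdom, fun D' hD' hdom' => ?_⟩
  obtain ⟨x, hxD, hxD'⟩ := exists_of_ssubset hD'
  obtain ⟨v, hv, hxv⟩ := hdom' x
  rcases mem_cnbhd.1 hxv with rfl | hadj
  · exact hxD' hv
  · exact hind (hD'.1 hv) hxD (ne_of_mem_of_not_mem hv hxD') hadj

lemma IsMinimalDominating.irredundant {D : Finset V} (hD : IsMinimalDominating G D) :
    Irredundant G D := by
  intro x hx
  obtain ⟨u, hu⟩ : ∃ u, ∀ v ∈ D.erase x, u ∉ cnbhd G v := by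
    simpa [Dominates] using hD.2 _ (erase_ssubset hx)
  obtain ⟨v, hv, huv⟩ := hD.1 u
  exact ⟨u, ⟨v, hv, huv⟩, fun ⟨v', hv', h'⟩ => hu v' hv' h'⟩

lemma Dominates.not_irredundant_of_ssubset {D T : Finset V} (hD : Dominates G D) (hDT : D ⊂ T) :
    ¬ Irredundant G T := by
  intro hT
  obtain ⟨x, hxT, hxD⟩ := exists_of_ssubset hDT
  obtain ⟨w, -, hw⟩ := hT x hxT
  obtain ⟨v, hv, hwv⟩ := hD w
  exact hw ⟨v, mem_erase.2 ⟨ne_of_mem_of_not_mem hv hxD, hDT.1 hv⟩, hwv⟩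

variable (G)

lemma indepNum_le_upperDomNum : indepNum G ≤ upperDomNum G := by
  obtain ⟨S, hS⟩ := G.maximumIndepSet_exists
  rw [indepNum_eq_simpleGraph_indepNum, ← G.maximumIndepSet_card_eq_indepNum S hS]
  exact card_le_upperDomNum <| isMinimalDominating_of_isIndepSet hS.isIndepSet <|
    dominates_of_maximal_isIndepSet (hS.isMaximalIndepSet S)

lemma upperDomNum_le_upperIrredNum : upperDomNum G ≤ upperIrredNum G :=
  csSup_le' fun _ ⟨_, hD, hcard⟩ =>
    hcard ▸ card_le_upperIrredNum hD.irredundant fun _ => hD.1.not_irredundant_of_ssubset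

end Domination

section PrivateNeighbors

variable {G : SimpleGraph V} {S : Finset V} {w : V → V}

def IsPrivateNeighborMap (G : SimpleGraph V) (S : Finset V) (w : V → V) : Prop :=
  ∀ x ∈ S, w x ∈ cnbhd G x ∧ ∀ y ∈ S, y ≠ x → w x ∉ cnbhd G y

lemma Irredundant.exists_isPrivateNeighborMap (hS : Irredundant G S) :
    ∃ w, IsPrivateNeighborMap G S w := by
  have h : ∀ x ∈ S, ∃ w ∈ cnbhd G x, ∀ y ∈ S, y ≠ x → w ∉ cnbhd G y := by
    intro x hx
    obtain ⟨w, ⟨v, hv, hwv⟩, hw⟩ := hS x hx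
    have hpriv : ∀ y ∈ S, y ≠ x → w ∉ cnbhd G y :=
      fun y hy hyx h => hw ⟨y, mem_erase.2 ⟨hyx, hy⟩, h⟩
    obtain rfl : v = x := by_contra fun hvx => hpriv v hv hvx hwv
    exact ⟨w, hwv, hpriv⟩
  choose! w hw using h
  exact ⟨w, hw⟩

lemma IsPrivateNeighborMap.injOn {f : V → V} (hw : IsPrivateNeighborMap G S w)
    (hf : ∀ x ∈ S, f x = x ∨ f x = w x) : Set.InjOn f S := by
  intro x hx y hy hxy
  by_contra hne
  have hxy' : w x ∉ cnbhd G y := (hw x hx).2 y hy (Ne.symm hne)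
  have hyx' : w y ∉ cnbhd G x := (hw y hy).2 x hx hne
  rcases hf x hx with h₁ | h₁ <;> rcases hf y hy with h₂ | h₂ <;> rw [h₁, h₂] at hxy
  · exact hne hxy
  · exact hyx' (by rw [← hxy]; exact mem_cnbhd_self x)
  · exact hxy' (by rw [hxy]; exact mem_cnbhd_self y)
  · exact hxy' (by rw [hxy]; exact (hw y hy).1)

lemma IsPrivateNeighborMap.isIndepSet_image {f : V → V} (c : G.Coloring (Fin 2))
    (hw : IsPrivateNeighborMap G S w) (hf : ∀ x ∈ S, f x = x ∨ f x = w x)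
    (hfc : ∀ x ∈ S, c (f x) = 1 ∨ f x = x ∧ w x = x) : G.IsIndepSet (S.image f : Set V) := by
  have key : ∀ x ∈ S, ∀ y ∈ S, y ≠ x → c (f x) = 0 → ¬ G.Adj (f x) (f y) := by
    intro x hx y hy hyx hcx hadj
    obtain ⟨hfx, hwx⟩ := (hfc x hx).resolve_left (by simp [hcx])
    rw [hfx] at hadj
    rcases hf y hy with hfy | hfy <;> rw [hfy] at hadj
    · exact (hw x hx).2 y hy hyx (by rw [hwx]; exact mem_cnbhd_of_adj hadj.symm)
    · exact (hw y hy).2 x hx (Ne.symm hyx) (mem_cnbhd_of_adj hadj)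
  rw [coe_image]
  rintro _ ⟨x, hx, rfl⟩ _ ⟨y, hy, rfl⟩ hne hadj
  have hyx : y ≠ x := fun h => hne (h ▸ rfl)
  have hc : c (f x) ≠ c (f y) := c.valid hadj
  by_cases hcx : c (f x) = 0
  · exact key x hx y hy hyx hcx hadj
  · exact key y hy x hx (Ne.symm hyx) (by omega) hadj.symm

lemma Irredundant.card_le_indepNum (hbip : G.Colorable 2) (hS : Irredundant G S) :
    S.card ≤ G.indepNum := by
  obtain ⟨c⟩ := hbip
  obtain ⟨w, hw⟩ := hS.exists_isPrivateNeighborMap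
  set f : V → V := fun x => if c x = 1 then x else w x
  have hf : ∀ x ∈ S, f x = x ∨ f x = w x := fun x _ => by
    by_cases h : c x = 1 <;> simp [f, h]
  have hfc : ∀ x ∈ S, c (f x) = 1 ∨ f x = x ∧ w x = x := by
    intro x hx
    by_cases h : c x = 1
    · simp [f, h]
    · rcases mem_cnbhd.1 (hw x hx).1 with hwx | hadj
      · simp [f, h, hwx]
      · left
        have hcol : c x ≠ c (w x) := c.valid hadj
        simp only [f, h, if_false]
        omega
  rw [← card_image_of_injOn (hw.injOn hf)]
  exact (hw.isIndepSet_image c hf hfc).card_le_indepNum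

variable (G) in
lemma upperIrredNum_le_indepNum (hbip : G.Colorable 2) : upperIrredNum G ≤ indepNum G := by
  rw [indepNum_eq_simpleGraph_indepNum]
  exact csSup_le' fun _ ⟨_, hS, _, hcard⟩ => hcard ▸ hS.card_le_indepNum hbip

end PrivateNeighbors

/-- if `G` is bipartite, then `α(G) = Γ(G) = IR(G)`. -/
theorem stmt16 {V : Type*} [Fintype V] (G : SimpleGraph V) (hbip : G.Colorable 2) :
    indepNum G = upperDomNum G ∧ upperDomNum G = upperIrredNum G := by
  have hαΓ := indepNum_le_upperDomNum G
  have hΓIR := upperDomNum_le_upperIrredNum G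
  have hIRα := upperIrredNum_le_indepNum G hbip
  exact ⟨le_antisymm hαΓ (hΓIR.trans hIRα), le_antisymm hΓIR (hIRα.trans hαΓ)⟩

end IndicatedDom
end
end
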